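/- For each n ∈ ℕ, let 𝒯_n be a hierarchy on a finite set V_n, S₀^{(n)} ⊆ V_n, and let p_adj^{C,(b),n} : Ω_n → [0,1] (C ∈ 𝒯_n, b = 1,…,B_n) be random variables on a probability space (Ω_n, ℱ_n, ℙ_n). Assume for each n there is a measurable event A_n with ℙ_n(A_n) → 1 as n → ∞, such that for every b ∈ {1,…,B_n} and every t ∈ (0,1), ∑_{C ∈ 𝒯̃₀^{(n)}} ℙ_n({p_adj^{C,(b),n} ≤ t} ∩ A_n) ≤ t. Then for every fixed γ ∈ (0,1) and every α ∈ (0,1): limsup_{n→∞} ℙ_n(∃ C ∈ 𝒯₀^{(n)} with Q_h^{C,n}(γ) ≤ α) ≤ α, and limsup_{n→∞} ℙ_n(∃ C ∈ 𝒯₀^{(n)} with P_h^{C,n} ≤ α) ≤ α. -/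

import Mathlib

open MeasureTheory Finset

/-- A hierarchy on a finite set `V`: a finite collection of nonempty subsets of `V`
containing `V` itself, such that any two members are nested or disjoint. -/
def IsHierarchy {ι : Type*} [DecidableEq ι] (V : Finset ι) (𝒯 : Finset (Finset ι)) : Prop :=
  V ∈ 𝒯 ∧ (∀ C ∈ 𝒯, C.Nonempty ∧ C ⊆ V) ∧
    ∀ C ∈ 𝒯, ∀ D ∈ 𝒯, C ⊆ D ∨ D ⊆ C ∨ C ∩ D = ∅

/-- The null clusters: members of the hierarchy not meeting the active set `S₀`. -/
def nullClusters {ι : Type*} [DecidableEq ι] (𝒯 : Finset (Finset ι)) (S₀ : Finset ι) :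
    Finset (Finset ι) :=
  𝒯.filter (fun C => C ∩ S₀ = ∅)

/-- The maximal null clusters: null clusters which are not strictly contained
in another null cluster. -/
def maxNullClusters {ι : Type*} [DecidableEq ι] (𝒯 : Finset (Finset ι)) (S₀ : Finset ι) :
    Finset (Finset ι) :=
  (nullClusters 𝒯 S₀).filter (fun C => ∀ D ∈ nullClusters 𝒯 S₀, ¬ C ⊂ D)

/-- The empirical `γ`-quantile of `a 1, …, a B`: the `⌈γ B⌉`-th smallest of the values. -/
noncomputable def empQuantile (γ : ℝ) {B : ℕ} (a : Fin B → ℝ) : ℝ :=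
  sInf {x : ℝ | ⌈γ * B⌉₊ ≤ (Finset.univ.filter (fun b => a b ≤ x)).card}

/-- The aggregated p-value `Q^C(γ) = min (1, q_γ({p_adj^{C,(b)}/γ}))`. -/
noncomputable def Qagg {ι : Type*} {Ω : Type*} {B : ℕ}
    (p : Finset ι → Fin B → Ω → ℝ) (γ : ℝ) (C : Finset ι) (ω : Ω) : ℝ :=
  min 1 (empQuantile γ (fun b => p C b ω / γ))

/-- The hierarchically adjusted aggregated p-value
`Q_h^C(γ) = max {Q^D(γ) : D ∈ 𝒯, C ⊆ D}` (for `C ∈ 𝒯`). -/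
noncomputable def Qhier {ι : Type*} [DecidableEq ι] {Ω : Type*} {B : ℕ}
    (𝒯 : Finset (Finset ι)) (p : Finset ι → Fin B → Ω → ℝ) (γ : ℝ)
    (C : Finset ι) (ω : Ω) : ℝ :=
  (insert C (𝒯.filter (fun D => C ⊆ D))).sup' (Finset.insert_nonempty _ _)
    (fun D => Qagg p γ D ω)


/-- The γ-free p-value `P^C = min (1, (1 - log γ_min) · inf_{γ ∈ (γ_min,1)} Q^C(γ))`. -/
noncomputable def Pval {ι : Type*} {Ω : Type*} {B : ℕ}
    (p : Finset ι → Fin B → Ω → ℝ) (γmin : ℝ) (C : Finset ι) (ω : Ω) : ℝ :=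
  min 1 ((1 - Real.log γmin) * sInf ((fun γ => Qagg p γ C ω) '' Set.Ioo γmin 1))

/-- The hierarchically adjusted γ-free p-value `P_h^C = max {P^D : D ∈ 𝒯, C ⊆ D}`
(for `C ∈ 𝒯`). -/
noncomputable def Phier {ι : Type*} [DecidableEq ι] {Ω : Type*} {B : ℕ}
    (𝒯 : Finset (Finset ι)) (p : Finset ι → Fin B → Ω → ℝ) (γmin : ℝ)
    (C : Finset ι) (ω : Ω) : ℝ :=
  (insert C (𝒯.filter (fun D => C ⊆ D))).sup' (Finset.insert_nonempty _ _)
    (fun D => Pval p γmin D ω)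

/-!
On the screening event `A`, every null cluster lies in a maximal null cluster and the
hierarchical adjustment only increases p-values, so a false rejection forces a small
aggregated p-value at some maximal null cluster `D`. If `Q^D(γ) ≤ α`, at least `⌈γB⌉` of the
`B` p-values `p^{D,(b)}` are `≤ γα`; Markov's inequality for this count, summed over the
maximal null clusters with the assumed bound, gives probability at most `α` on `A`.
For `P^D` the level `γ` is data dependent: `P^D ≤ α` yields some `k ∈ (γ_min B, B]` with
`#{b | p^{D,(b)} ≤ k u / B} ≥ k` for every `u > α / (1 - log γ_min)`, and Markov's inequality
is applied to `∑ₖ wₖ #{b | p^{D,(b)} ≤ k u / B}` with weights whose tail sums are `1 / k`;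
the harmonic tail bounds its cost by `u (1 - log γ_min)`. Since `ℙ(Aₙ) → 1`, bounds on `Aₙ`
become bounds on the `limsup`.
-/

open Filter Topology
open scoped ENNReal

theorem eventually_card_filter_le_eq {β : Type*} [Fintype β] (a : β → ℝ) (x : ℝ) :
    ∀ᶠ y in 𝓝[>] x, #{b | a b ≤ y} = #{b | a b ≤ x} := by
  have h : ∀ᶠ y in 𝓝[>] x, ∀ b, (a b ≤ y ↔ a b ≤ x) := by
    rw [eventually_all]
    intro b
    by_cases hb : a b ≤ x
    · filter_upwards [self_mem_nhdsWithin] with y hy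
      exact iff_of_true (hb.trans (le_of_lt hy)) hb
    · filter_upwards [nhdsWithin_le_nhds (gt_mem_nhds (not_le.mp hb))] with y hy
      exact iff_of_false (not_le.mpr hy) hb
  filter_upwards [h] with y hy
  simp only [hy]

theorem ceil_le_card_of_empQuantile_le {B : ℕ} {γ : ℝ} (hγ : γ ≤ 1)
    (a : Fin B → ℝ) {x : ℝ} (hx : empQuantile γ a ≤ x) : ⌈γ * B⌉₊ ≤ #{b | a b ≤ x} := by
  set S := {y : ℝ | ⌈γ * B⌉₊ ≤ #{b | a b ≤ y}}
  have hne : S.Nonempty := by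
    obtain ⟨M, hM⟩ := (Set.finite_range a).bddAbove
    refine ⟨M, ?_⟩
    simp only [S, Set.mem_ofPred_eq, filter_true_of_mem fun b _ => hM ⟨b, rfl⟩, card_univ,
      Fintype.card_fin, Nat.ceil_le]
    exact mul_le_of_le_one_left (Nat.cast_nonneg B) hγ
  have hright : ∀ᶠ y in 𝓝[>] x, y ∈ S := by
    filter_upwards [self_mem_nhdsWithin] with y hy
    obtain ⟨s, hs, hsy⟩ := exists_lt_of_csInf_lt hne (hx.trans_lt hy)
    exact hs.trans (card_le_card fun b hb => by
      simp only [mem_filter] at hb ⊢; exact ⟨hb.1, hb.2.trans hsy.le⟩)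
  obtain ⟨y, hyS, hy⟩ := (hright.and (eventually_card_filter_le_eq a x)).exists
  exact hy ▸ hyS

section Aggregation

variable {ι Ω : Type*} {B : ℕ} (p : Finset ι → Fin B → Ω → ℝ) (C : Finset ι) (ω : Ω)

theorem ceil_le_card_of_Qagg_le {γ x : ℝ} (hγ : γ ∈ Set.Ioc 0 1) (hx : x < 1)
    (h : Qagg p γ C ω ≤ x) : ⌈γ * B⌉₊ ≤ #{b | p C b ω ≤ γ * x} := by
  have hq : empQuantile γ (fun b => p C b ω / γ) ≤ x := by
    rw [Qagg, min_le_iff] at h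
    exact h.resolve_left hx.not_ge
  simpa only [div_le_iff₀' hγ.1] using ceil_le_card_of_empQuantile_le hγ.2 _ hq

theorem Qagg_nonneg (hB : 0 < B) {γ : ℝ} (hγ : 0 < γ) (hp : ∀ b, 0 ≤ p C b ω) :
    0 ≤ Qagg p γ C ω := by
  refine le_min zero_le_one (Real.sInf_nonneg fun y hy => ?_)
  have hpos : 0 < ⌈γ * B⌉₊ := Nat.ceil_pos.mpr (mul_pos hγ (Nat.cast_pos.mpr hB))
  obtain ⟨b, hb⟩ := card_pos.mp (hpos.trans_le hy)
  exact (div_nonneg (hp b) hγ.le).trans (mem_filter.mp hb).2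

theorem exists_Qagg_lt_of_Pval_le (hB : 0 < B) (hp : ∀ b, 0 ≤ p C b ω) {γmin α u : ℝ}
    (hγmin : γmin ∈ Set.Ioo 0 1) (hα : α < 1) (hu : α / (1 - Real.log γmin) < u)
    (h : Pval p γmin C ω ≤ α) : ∃ γ ∈ Set.Ioo γmin 1, Qagg p γ C ω < u := by
  have hfac : 0 < 1 - Real.log γmin := by linarith [Real.log_neg hγmin.1 hγmin.2]
  have hinf : sInf ((fun γ => Qagg p γ C ω) '' Set.Ioo γmin 1) < u := by
    rw [Pval, min_le_iff] at h
    exact ((le_div_iff₀' hfac).mpr (h.resolve_left hα.not_ge)).trans_lt hu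
  have hbdd : BddBelow ((fun γ => Qagg p γ C ω) '' Set.Ioo γmin 1) := by
    refine ⟨0, ?_⟩
    rintro _ ⟨γ, hγ, rfl⟩
    exact Qagg_nonneg p C ω hB (hγmin.1.trans hγ.1) hp
  obtain ⟨_, ⟨γ, hγ, rfl⟩, hlt⟩ :=
    (csInf_lt_iff hbdd ((Set.nonempty_Ioo.mpr hγmin.2).image _)).mp hinf
  exact ⟨γ, hγ, hlt⟩

theorem exists_le_card_of_Pval_le (hB : 0 < B) (hp : ∀ b, 0 ≤ p C b ω) {γmin α u : ℝ}
    (hγmin : γmin ∈ Set.Ioo 0 1) (hα : α < 1) (hu : α / (1 - Real.log γmin) < u)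
    (hu1 : u < 1) (h : Pval p γmin C ω ≤ α) :
    ∃ k : ℕ, γmin * B < k ∧ k ≤ B ∧ k ≤ #{b | p C b ω ≤ k * u / B} := by
  obtain ⟨γ, hγ, hQ⟩ := exists_Qagg_lt_of_Pval_le p C ω hB hp hγmin hα hu h
  have hγ0 : 0 < γ := hγmin.1.trans hγ.1
  have hBR : (0 : ℝ) < B := Nat.cast_pos.mpr hB
  refine ⟨⌈γ * B⌉₊, ?_, ?_, ?_⟩
  · exact (mul_lt_mul_of_pos_right hγ.1 hBR).trans_le (Nat.le_ceil _)
  · exact Nat.ceil_le.mpr (mul_le_of_le_one_left hBR.le hγ.2.le)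
  · refine (ceil_le_card_of_Qagg_le p C ω ⟨hγ0, hγ.2.le⟩ hu1 hQ.le).trans
      (card_le_card fun b hb => ?_)
    simp only [mem_filter] at hb ⊢
    refine ⟨hb.1, hb.2.trans ?_⟩
    have hu0 : 0 ≤ u := (Qagg_nonneg p C ω hB hγ0 hp).trans hQ.le
    rw [le_div_iff₀ hBR, mul_right_comm]
    exact mul_le_mul_of_nonneg_right (Nat.le_ceil _) hu0

end Aggregation

noncomputable def tailWeight (B k : ℕ) : ℝ :=
  if k < B then (k : ℝ)⁻¹ - ((k : ℝ) + 1)⁻¹ else (B : ℝ)⁻¹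

section TailWeight

variable {B : ℕ}

theorem tailWeight_nonneg {k : ℕ} (hk : 0 < k) : 0 ≤ tailWeight B k := by
  unfold tailWeight
  split_ifs
  · have : (0 : ℝ) < k := Nat.cast_pos.mpr hk
    exact sub_nonneg.mpr (inv_anti₀ this (by linarith))
  · positivity

theorem sum_Icc_tailWeight {k : ℕ} (hk : k ≤ B) :
    ∑ j ∈ Icc k B, tailWeight B j = (k : ℝ)⁻¹ := by
  have hIco : ∑ j ∈ Ico k B, tailWeight B j = (k : ℝ)⁻¹ - (B : ℝ)⁻¹ := calc
    _ = ∑ j ∈ Ico k B, (-((j + 1 : ℕ) : ℝ)⁻¹ - -(j : ℝ)⁻¹) :=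
      sum_congr rfl fun j hj => by simp [tailWeight, (mem_Ico.mp hj).2]; ring
    _ = _ := by rw [sum_Ico_sub (fun j : ℕ => -(j : ℝ)⁻¹) hk]; ring
  rw [← Ico_add_one_right_eq_Icc, sum_Ico_succ_top hk, hIco, tailWeight, if_neg (lt_irrefl B)]
  ring

theorem one_le_sum_tailWeight_mul {k₀ k : ℕ} (hk₀ : 0 < k₀) (hk : k ∈ Icc k₀ B) {N : ℕ → ℕ}
    (hN : Monotone N) (hkN : k ≤ N k) : 1 ≤ ∑ j ∈ Icc k₀ B, tailWeight B j * N j := by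
  obtain ⟨hk₀k, hkB⟩ := mem_Icc.mp hk
  have hkpos : (0 : ℝ) < k := Nat.cast_pos.mpr (hk₀.trans_le hk₀k)
  calc (1 : ℝ) = (∑ j ∈ Icc k B, tailWeight B j) * k := by
        rw [sum_Icc_tailWeight hkB, inv_mul_cancel₀ hkpos.ne']
    _ ≤ ∑ j ∈ Icc k B, tailWeight B j * N j := by
        rw [sum_mul]
        refine sum_le_sum fun j hj => mul_le_mul_of_nonneg_left ?_ ?_
        · exact hkN.trans (hN (mem_Icc.mp hj).1) |> Nat.cast_le.mpr
        · exact tailWeight_nonneg (hk₀.trans_le (hk₀k.trans (mem_Icc.mp hj).1))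
    _ ≤ ∑ j ∈ Icc k₀ B, tailWeight B j * N j := by
        refine sum_le_sum_of_subset_of_nonneg (Icc_subset_Icc_left hk₀k) fun j hj _ => ?_
        exact mul_nonneg (tailWeight_nonneg (hk₀.trans_le (mem_Icc.mp hj).1)) (Nat.cast_nonneg _)

theorem inv_add_one_le_log_sub {x : ℝ} (hx : 0 < x) :
    (x + 1)⁻¹ ≤ Real.log (x + 1) - Real.log x := by
  rw [← Real.log_div (by positivity) hx.ne']
  convert Real.one_sub_inv_le_log_of_pos (by positivity : 0 < (x + 1) / x) using 1
  field_simp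
  ring

theorem sum_Icc_tailWeight_mul_self_le {k₀ : ℕ} (hk₀ : 0 < k₀) (hk₀B : k₀ ≤ B) :
    ∑ j ∈ Icc k₀ B, tailWeight B j * j ≤ 1 + Real.log B - Real.log k₀ := by
  have hB : (0 : ℝ) < B := Nat.cast_pos.mpr (hk₀.trans_le hk₀B)
  have hIco : ∑ j ∈ Ico k₀ B, tailWeight B j * j ≤ Real.log B - Real.log k₀ := calc
    _ = ∑ j ∈ Ico k₀ B, ((j : ℝ) + 1)⁻¹ := sum_congr rfl fun j hj => by
        have : (0 : ℝ) < j := Nat.cast_pos.mpr (hk₀.trans_le (mem_Ico.mp hj).1)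
        simp only [tailWeight, if_pos (mem_Ico.mp hj).2]
        field_simp
        ring
    _ ≤ ∑ j ∈ Ico k₀ B, (Real.log ((j + 1 : ℕ) : ℝ) - Real.log j) := sum_le_sum fun j hj => by
        push_cast
        exact inv_add_one_le_log_sub (Nat.cast_pos.mpr (hk₀.trans_le (mem_Ico.mp hj).1))
    _ = _ := sum_Ico_sub (fun j : ℕ => Real.log j) hk₀B
  rw [← Ico_add_one_right_eq_Icc, sum_Ico_succ_top hk₀B, tailWeight, if_neg (lt_irrefl B),
    inv_mul_cancel₀ hB.ne']
  linarith

end TailWeight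

section Markov

theorem natCast_card_filter_le_eq_sum_indicator {Ω β : Type*} [Fintype β] (f : β → Ω → ℝ)
    (t : ℝ) (ω : Ω) :
    (#{b | f b ω ≤ t} : ℝ≥0∞) = ∑ b, {ω | f b ω ≤ t}.indicator 1 ω := by
  simp only [card_filter, Nat.cast_sum, Nat.cast_ite, Nat.cast_one, Nat.cast_zero,
    Set.indicator_apply, Set.mem_ofPred_eq, Pi.one_apply]

variable {Ω β : Type*} [MeasurableSpace Ω] [Fintype β] (μ : Measure Ω) (A : Set Ω)
  {f : β → Ω → ℝ}

theorem measurable_natCast_card_filter_le (hf : ∀ b, Measurable (f b)) (t : ℝ) :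
    Measurable fun ω => (#{b | f b ω ≤ t} : ℝ≥0∞) := by
  simp only [natCast_card_filter_le_eq_sum_indicator f]
  exact Finset.measurable_sum _ fun b _ =>
    measurable_const.indicator (measurableSet_le (hf b) measurable_const)

theorem setLIntegral_natCast_card_filter_le (hf : ∀ b, Measurable (f b)) (t : ℝ) :
    ∫⁻ ω in A, (#{b | f b ω ≤ t} : ℝ≥0∞) ∂μ = ∑ b, μ ({ω | f b ω ≤ t} ∩ A) := by
  have hs : ∀ b, MeasurableSet {ω | f b ω ≤ t} := fun b => measurableSet_le (hf b) measurable_const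
  simp only [natCast_card_filter_le_eq_sum_indicator f]
  rw [lintegral_finsetSum _ fun b _ => measurable_one.indicator (hs b)]
  exact sum_congr rfl fun b _ => by
    rw [lintegral_indicator_one (hs b), Measure.restrict_apply (hs b)]

theorem measure_one_le_weighted_count_inter_le (hf : ∀ b, Measurable (f b)) (K : Finset ℕ)
    (w t : ℕ → ℝ) (hw : ∀ k ∈ K, 0 ≤ w k) :
    μ ({ω | 1 ≤ ∑ k ∈ K, w k * #{b | f b ω ≤ t k}} ∩ A) ≤
      ∑ k ∈ K, ENNReal.ofReal (w k) * ∑ b, μ ({ω | f b ω ≤ t k} ∩ A) := by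
  set g : Ω → ℝ≥0∞ := fun ω => ∑ k ∈ K, ENNReal.ofReal (w k) * #{b | f b ω ≤ t k}
  have hg : Measurable g := Finset.measurable_sum _ fun k _ =>
    (measurable_natCast_card_filter_le hf (t k)).const_mul _
  have hofReal : ∀ ω, ENNReal.ofReal (∑ k ∈ K, w k * #{b | f b ω ≤ t k}) = g ω := fun ω => by
    rw [ENNReal.ofReal_sum_of_nonneg fun k hk => mul_nonneg (hw k hk) (Nat.cast_nonneg _)]
    exact sum_congr rfl fun k hk => by rw [ENNReal.ofReal_mul (hw k hk), ENNReal.ofReal_natCast]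
  have hsub : {ω | 1 ≤ ∑ k ∈ K, w k * #{b | f b ω ≤ t k}} ⊆ {ω | 1 ≤ g ω} := fun ω hω => by
    rw [Set.mem_ofPred_eq, ← hofReal, ENNReal.one_le_ofReal]
    exact hω
  calc μ ({ω | 1 ≤ ∑ k ∈ K, w k * #{b | f b ω ≤ t k}} ∩ A)
      ≤ μ.restrict A {ω | 1 ≤ g ω} :=
        (measure_mono (Set.inter_subset_inter_left A hsub)).trans (Measure.le_restrict_apply _ _)
    _ ≤ ∫⁻ ω in A, g ω ∂μ := by
        simpa using mul_meas_ge_le_lintegral₀ hg.aemeasurable (μ := μ.restrict A) 1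
    _ = _ := by
      rw [lintegral_finsetSum _ fun k _ => (measurable_natCast_card_filter_le hf (t k)).const_mul _]
      exact sum_congr rfl fun k _ => by
        rw [lintegral_const_mul _ (measurable_natCast_card_filter_le hf (t k)),
          setLIntegral_natCast_card_filter_le μ A hf]

theorem measure_biUnion_one_le_weighted_count_inter_le {κ : Type*} (𝒟 : Finset κ) {B : ℕ}
    {p : κ → Fin B → Ω → ℝ} (hp : ∀ D ∈ 𝒟, ∀ b, Measurable (p D b))
    (hsuper : ∀ b, ∀ t ∈ Set.Ioo (0 : ℝ) 1,
      ∑ D ∈ 𝒟, μ ({ω | p D b ω ≤ t} ∩ A) ≤ ENNReal.ofReal t)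
    (K : Finset ℕ) (w t : ℕ → ℝ) (hw : ∀ k ∈ K, 0 ≤ w k) (ht : ∀ k ∈ K, t k ∈ Set.Ioo 0 1) :
    μ ((⋃ D ∈ 𝒟, {ω | 1 ≤ ∑ k ∈ K, w k * #{b | p D b ω ≤ t k}}) ∩ A) ≤
      ENNReal.ofReal (B * ∑ k ∈ K, w k * t k) := calc
  _ ≤ ∑ D ∈ 𝒟, μ ({ω | 1 ≤ ∑ k ∈ K, w k * #{b | p D b ω ≤ t k}} ∩ A) := by
    rw [Set.iUnion₂_inter]
    exact measure_biUnion_finset_le _ _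
  _ ≤ ∑ D ∈ 𝒟, ∑ k ∈ K, ENNReal.ofReal (w k) * ∑ b, μ ({ω | p D b ω ≤ t k} ∩ A) :=
    sum_le_sum fun D hD => measure_one_le_weighted_count_inter_le μ A (hp D hD) K w t hw
  _ = ∑ k ∈ K, ENNReal.ofReal (w k) * ∑ b, ∑ D ∈ 𝒟, μ ({ω | p D b ω ≤ t k} ∩ A) := by
    rw [sum_comm]
    exact sum_congr rfl fun k _ => by rw [← mul_sum, sum_comm]
  _ ≤ ∑ k ∈ K, ENNReal.ofReal (w k) * ∑ _b : Fin B, ENNReal.ofReal (t k) := by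
    gcongr with k hk b
    exact hsuper b (t k) (ht k hk)
  _ = ENNReal.ofReal (B * ∑ k ∈ K, w k * t k) := by
    rw [mul_sum, ENNReal.ofReal_sum_of_nonneg fun k hk =>
      mul_nonneg (Nat.cast_nonneg B) (mul_nonneg (hw k hk) (ht k hk).1.le)]
    refine sum_congr rfl fun k hk => ?_
    rw [sum_const, card_univ, Fintype.card_fin, nsmul_eq_mul, mul_left_comm,
      ENNReal.ofReal_mul (Nat.cast_nonneg B), ENNReal.ofReal_mul (hw k hk), ENNReal.ofReal_natCast]

end Markov

section Clusters

variable {ι : Type*} [DecidableEq ι] {𝒯 : Finset (Finset ι)} {S₀ : Finset ι}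

theorem maxNullClusters_subset : maxNullClusters 𝒯 S₀ ⊆ 𝒯 :=
  (filter_subset _ _).trans (filter_subset _ _)

theorem exists_mem_maxNullClusters_superset {C : Finset ι} (hC : C ∈ nullClusters 𝒯 S₀) :
    ∃ D ∈ maxNullClusters 𝒯 S₀, C ⊆ D := by
  obtain ⟨D, hCD, hD⟩ := (nullClusters 𝒯 S₀).exists_le_maximal hC
  refine ⟨D, mem_filter.mpr ⟨hD.prop, fun D' hD' hDD' => ?_⟩, hCD⟩
  exact hDD'.not_subset (hD.le_of_ge hD' hDD'.subset)

theorem setOf_exists_sup'_le_subset_biUnion_maxNullClusters {Ω : Type*}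
    (f : Finset ι → Ω → ℝ) (α : ℝ) :
    {ω | ∃ C ∈ nullClusters 𝒯 S₀,
        (insert C (𝒯.filter (fun D => C ⊆ D))).sup' (insert_nonempty _ _) (f · ω) ≤ α} ⊆
      ⋃ D ∈ maxNullClusters 𝒯 S₀, {ω | f D ω ≤ α} := by
  rintro ω ⟨C, hC, hle⟩
  obtain ⟨D, hD, hCD⟩ := exists_mem_maxNullClusters_superset hC
  refine Set.mem_biUnion hD ((le_sup' (f · ω) ?_).trans hle)
  exact mem_insert_of_mem (mem_filter.mpr ⟨maxNullClusters_subset hD, hCD⟩)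

end Clusters

section FWER

variable {ι Ω : Type*} [DecidableEq ι] [MeasurableSpace Ω] (μ : Measure Ω) (A : Set Ω)
  {𝒯 : Finset (Finset ι)} {S₀ : Finset ι} {B : ℕ} {p : Finset ι → Fin B → Ω → ℝ}

theorem measure_exists_Qhier_le_inter_le (hB : 0 < B)
    (hmeas : ∀ C ∈ 𝒯, ∀ b, Measurable (p C b))
    (hsuper : ∀ b, ∀ t ∈ Set.Ioo (0 : ℝ) 1,
      ∑ C ∈ maxNullClusters 𝒯 S₀, μ ({ω | p C b ω ≤ t} ∩ A) ≤ ENNReal.ofReal t)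
    {γ α : ℝ} (hγ : γ ∈ Set.Ioo 0 1) (hα : α ∈ Set.Ioo 0 1) :
    μ ({ω | ∃ C ∈ nullClusters 𝒯 S₀, Qhier 𝒯 p γ C ω ≤ α} ∩ A) ≤ ENNReal.ofReal α := by
  set k := ⌈γ * B⌉₊
  have hkB : γ * B ≤ k := Nat.le_ceil _
  have hk : (0 : ℝ) < k := hkB.trans_lt' (mul_pos hγ.1 (Nat.cast_pos.mpr hB))
  have hsub : {ω | ∃ C ∈ nullClusters 𝒯 S₀, Qhier 𝒯 p γ C ω ≤ α} ⊆
      ⋃ D ∈ maxNullClusters 𝒯 S₀,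
        {ω | 1 ≤ ∑ j ∈ {k}, (j : ℝ)⁻¹ * #{b | p D b ω ≤ γ * α}} := by
    refine (setOf_exists_sup'_le_subset_biUnion_maxNullClusters (Qagg p γ) α).trans
      (Set.biUnion_mono subset_rfl fun D _ ω hω => ?_)
    have hcard := ceil_le_card_of_Qagg_le p D ω ⟨hγ.1, hγ.2.le⟩ hα.2 hω
    rw [Set.mem_ofPred_eq, sum_singleton, inv_mul_eq_div, one_le_div hk]
    exact_mod_cast hcard
  refine (measure_mono (Set.inter_subset_inter_left A hsub)).trans ?_
  refine (measure_biUnion_one_le_weighted_count_inter_le μ A _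
    (fun D hD => hmeas D (maxNullClusters_subset hD)) hsuper {k} _ (fun _ => γ * α)
    (fun j _ => by positivity)
    fun _ _ => ⟨mul_pos hγ.1 hα.1, (mul_lt_of_lt_one_left hα.1 hγ.2).trans hα.2⟩).trans ?_
  apply ENNReal.ofReal_le_ofReal
  rw [sum_singleton, inv_mul_eq_div, mul_div_assoc', div_le_iff₀ hk]
  nlinarith [hα.1]

theorem measure_exists_Phier_le_inter_le_of_lt (hB : 0 < B)
    (hmeas : ∀ C ∈ 𝒯, ∀ b, Measurable (p C b)) (hp : ∀ C ∈ 𝒯, ∀ b ω, 0 ≤ p C b ω)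
    (hsuper : ∀ b, ∀ t ∈ Set.Ioo (0 : ℝ) 1,
      ∑ C ∈ maxNullClusters 𝒯 S₀, μ ({ω | p C b ω ≤ t} ∩ A) ≤ ENNReal.ofReal t)
    {γmin α u : ℝ} (hγmin : γmin ∈ Set.Ioo 0 1) (hα : α ∈ Set.Ioo 0 1)
    (hu : α / (1 - Real.log γmin) < u) (hu1 : u < 1) :
    μ ({ω | ∃ C ∈ nullClusters 𝒯 S₀, Phier 𝒯 p γmin C ω ≤ α} ∩ A) ≤
      ENNReal.ofReal (u * (1 - Real.log γmin)) := by
  have hBR : (0 : ℝ) < B := Nat.cast_pos.mpr hB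
  have hu0 : 0 < u := (div_pos hα.1 (by linarith [Real.log_neg hγmin.1 hγmin.2])).trans hu
  set k₀ := ⌊γmin * B⌋₊ + 1
  have hk₀ : ∀ k : ℕ, k₀ ≤ k ↔ γmin * B < k := fun k => by
    rw [Nat.add_one_le_iff, Nat.floor_lt (mul_nonneg hγmin.1.le hBR.le)]
  have hk₀B : k₀ ≤ B := (hk₀ B).2 (mul_lt_of_lt_one_left hBR hγmin.2)
  have hk₀pos : 0 < k₀ := Nat.succ_pos _
  have hsub : {ω | ∃ C ∈ nullClusters 𝒯 S₀, Phier 𝒯 p γmin C ω ≤ α} ⊆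
      ⋃ D ∈ maxNullClusters 𝒯 S₀,
        {ω | 1 ≤ ∑ j ∈ Icc k₀ B, tailWeight B j * #{b | p D b ω ≤ j * u / B}} := by
    refine (setOf_exists_sup'_le_subset_biUnion_maxNullClusters (Pval p γmin) α).trans
      (Set.biUnion_mono subset_rfl fun D hD ω hω => ?_)
    obtain ⟨k, hk, hkB, hcard⟩ := exists_le_card_of_Pval_le p D ω hB
      (hp D (maxNullClusters_subset hD) · ω) hγmin hα.2 hu hu1 hω
    refine one_le_sum_tailWeight_mul hk₀pos (mem_Icc.mpr ⟨(hk₀ k).2 hk, hkB⟩)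
      (fun i j hij => card_le_card fun b hb => ?_) hcard
    simp only [mem_filter] at hb ⊢
    exact ⟨hb.1, hb.2.trans (by gcongr)⟩
  refine (measure_mono (Set.inter_subset_inter_left A hsub)).trans ?_
  refine (measure_biUnion_one_le_weighted_count_inter_le μ A _
    (fun D hD => hmeas D (maxNullClusters_subset hD)) hsuper (Icc k₀ B) (tailWeight B)
    (fun j : ℕ => j * u / B) (fun j hj => tailWeight_nonneg (hk₀pos.trans_le (mem_Icc.mp hj).1))
    fun j hj => ?_).trans (ENNReal.ofReal_le_ofReal ?_)
  · obtain ⟨hk₀j, hjB⟩ := mem_Icc.mp hj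
    have hj0 : (0 : ℝ) < j := Nat.cast_pos.mpr (hk₀pos.trans_le hk₀j)
    exact ⟨by positivity, (div_lt_one hBR).2
      ((mul_lt_of_lt_one_right hj0 hu1).trans_le (Nat.cast_le.mpr hjB))⟩
  · have hlog : Real.log (γmin * B) ≤ Real.log k₀ :=
      Real.log_le_log (mul_pos hγmin.1 hBR) ((hk₀ k₀).1 le_rfl).le
    rw [Real.log_mul hγmin.1.ne' hBR.ne'] at hlog
    have hsum := sum_Icc_tailWeight_mul_self_le hk₀pos hk₀B
    calc (B : ℝ) * ∑ j ∈ Icc k₀ B, tailWeight B j * (j * u / B)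
        = u * ∑ j ∈ Icc k₀ B, tailWeight B j * j := by
          rw [mul_sum, mul_sum]
          exact sum_congr rfl fun j _ => by field_simp
      _ ≤ u * (1 - Real.log γmin) := by gcongr; linarith

theorem measure_exists_Phier_le_inter_le (hB : 0 < B)
    (hmeas : ∀ C ∈ 𝒯, ∀ b, Measurable (p C b)) (hp : ∀ C ∈ 𝒯, ∀ b ω, 0 ≤ p C b ω)
    (hsuper : ∀ b, ∀ t ∈ Set.Ioo (0 : ℝ) 1,
      ∑ C ∈ maxNullClusters 𝒯 S₀, μ ({ω | p C b ω ≤ t} ∩ A) ≤ ENNReal.ofReal t)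
    {γmin α : ℝ} (hγmin : γmin ∈ Set.Ioo 0 1) (hα : α ∈ Set.Ioo 0 1) :
    μ ({ω | ∃ C ∈ nullClusters 𝒯 S₀, Phier 𝒯 p γmin C ω ≤ α} ∩ A) ≤ ENNReal.ofReal α := by
  set c := 1 - Real.log γmin
  have hc : 1 < c := by linarith [Real.log_neg hγmin.1 hγmin.2]
  have hlim : Tendsto (fun u => ENNReal.ofReal (u * c)) (𝓝[>] (α / c)) (𝓝 (ENNReal.ofReal α)) := by
    conv => arg 3; rw [← div_mul_cancel₀ α (zero_lt_one.trans hc).ne']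
    exact ((ENNReal.continuous_ofReal.comp (continuous_mul_const c)).tendsto _).mono_left
      nhdsWithin_le_nhds
  refine ge_of_tendsto hlim ?_
  filter_upwards [Ioo_mem_nhdsGT ((div_lt_one (zero_lt_one.trans hc)).2 (hα.2.trans hc))]
    with u hu
  exact measure_exists_Phier_le_inter_le_of_lt μ A hB hmeas hp hsuper hγmin hα hu.1 hu.2

end FWER

theorem limsup_measure_le_of_measure_inter_le {κ : Type*} {l : Filter κ} [l.NeBot]
    {Ω : κ → Type*} [∀ n, MeasurableSpace (Ω n)] (P : ∀ n, Measure (Ω n))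
    [∀ n, IsProbabilityMeasure (P n)] {A E : ∀ n, Set (Ω n)} (hA : ∀ n, MeasurableSet (A n))
    (hPA : Tendsto (fun n => P n (A n)) l (𝓝 1)) {c : ℝ≥0∞}
    (hE : ∀ n, P n (E n ∩ A n) ≤ c) :
    limsup (fun n => P n (E n)) l ≤ c := by
  have hcompl : Tendsto (fun n => P n (A n)ᶜ) l (𝓝 0) := by
    simp only [prob_compl_eq_one_sub (hA _)]
    simpa using ENNReal.Tendsto.sub tendsto_const_nhds hPA (Or.inl ENNReal.one_ne_top)
  have hle : ∀ n, P n (E n) ≤ c + P n (A n)ᶜ := fun n => calc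
    P n (E n) ≤ P n (E n ∩ A n) + P n (E n \ A n) := measure_le_inter_add_sdiff _ _ _
    _ ≤ c + P n (A n)ᶜ := add_le_add (hE n) (measure_mono (Set.sdiff_subset_compl _ _))
  calc limsup (fun n => P n (E n)) l ≤ limsup (fun n => c + P n (A n)ᶜ) l :=
        limsup_le_limsup (Eventually.of_forall hle)
    _ = c := by simpa using (hcompl.const_add c).limsup_eq

theorem asymptotic_fwer_control_general
    {ι : Type*} [DecidableEq ι]
    (Ω : ℕ → Type*) [mΩ : ∀ n, MeasurableSpace (Ω n)]
    (P : ∀ n, Measure (Ω n)) [∀ n, IsProbabilityMeasure (P n)]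
    (S₀ : ℕ → Finset ι) (𝒯 : ℕ → Finset (Finset ι))
    (B : ℕ → ℕ) (hB : ∀ n, 1 ≤ B n)
    (p : ∀ n, Finset ι → Fin (B n) → Ω n → ℝ)
    (hmeas : ∀ n, ∀ C ∈ 𝒯 n, ∀ b : Fin (B n), Measurable (p n C b))
    (hp01 : ∀ n, ∀ C ∈ 𝒯 n, ∀ (b : Fin (B n)) (ω : Ω n), p n C b ω ∈ Set.Icc (0 : ℝ) 1)
    (A : ∀ n, Set (Ω n)) (hA : ∀ n, MeasurableSet (A n))
    (hPA : Filter.Tendsto (fun n => P n (A n)) Filter.atTop (nhds 1))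
    (hsuper : ∀ n, ∀ b : Fin (B n), ∀ t ∈ Set.Ioo (0 : ℝ) 1,
      ∑ C ∈ maxNullClusters (𝒯 n) (S₀ n), P n ({ω | p n C b ω ≤ t} ∩ A n)
        ≤ ENNReal.ofReal t)
    {γmin : ℝ} (hγmin : γmin ∈ Set.Ioo (0 : ℝ) 1)
    {γ α : ℝ} (hγ : γ ∈ Set.Ioo (0 : ℝ) 1) (hα : α ∈ Set.Ioo (0 : ℝ) 1) :
    Filter.limsup
        (fun n => P n {ω | ∃ C ∈ nullClusters (𝒯 n) (S₀ n), Qhier (𝒯 n) (p n) γ C ω ≤ α})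
        Filter.atTop ≤ ENNReal.ofReal α
      ∧ Filter.limsup
        (fun n => P n {ω | ∃ C ∈ nullClusters (𝒯 n) (S₀ n), Phier (𝒯 n) (p n) γmin C ω ≤ α})
        Filter.atTop ≤ ENNReal.ofReal α := by
  exact ⟨limsup_measure_le_of_measure_inter_le P hA hPA fun n =>
      measure_exists_Qhier_le_inter_le (P n) (A n) (hB n) (hmeas n) (hsuper n) hγ hα,
    limsup_measure_le_of_measure_inter_le P hA hPA fun n =>
      measure_exists_Phier_le_inter_le (P n) (A n) (hB n) (hmeas n)
        (fun C hC b ω => (hp01 n C hC b ω).1) (hsuper n) hγmin hα⟩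

/-- **Asymptotic FWER control** (Corollary 1 of Mandozzi–Bühlmann): if the screening
events `A n` have probability tending to one, then both families of hierarchically
adjusted p-values asymptotically control the familywise error rate at level `α`. -/
theorem asymptotic_fwer_control
    {ι : Type*} [DecidableEq ι]
    (Ω : ℕ → Type*) [mΩ : ∀ n, MeasurableSpace (Ω n)]
    (P : ∀ n, Measure (Ω n)) [∀ n, IsProbabilityMeasure (P n)]
    (V S₀ : ℕ → Finset ι) (𝒯 : ℕ → Finset (Finset ι))
    (h𝒯 : ∀ n, IsHierarchy (V n) (𝒯 n)) (hS₀ : ∀ n, S₀ n ⊆ V n)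
    (B : ℕ → ℕ) (hB : ∀ n, 1 ≤ B n)
    (p : ∀ n, Finset ι → Fin (B n) → Ω n → ℝ)
    (hmeas : ∀ n, ∀ C ∈ 𝒯 n, ∀ b : Fin (B n), Measurable (p n C b))
    (hp01 : ∀ n, ∀ C ∈ 𝒯 n, ∀ (b : Fin (B n)) (ω : Ω n), p n C b ω ∈ Set.Icc (0 : ℝ) 1)
    (A : ∀ n, Set (Ω n)) (hA : ∀ n, MeasurableSet (A n))
    (hPA : Filter.Tendsto (fun n => P n (A n)) Filter.atTop (nhds 1))
    (hsuper : ∀ n, ∀ b : Fin (B n), ∀ t ∈ Set.Ioo (0 : ℝ) 1,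
      ∑ C ∈ maxNullClusters (𝒯 n) (S₀ n), P n ({ω | p n C b ω ≤ t} ∩ A n)
        ≤ ENNReal.ofReal t)
    {γmin : ℝ} (hγmin : γmin ∈ Set.Ioo (0 : ℝ) 1)
    {γ α : ℝ} (hγ : γ ∈ Set.Ioo (0 : ℝ) 1) (hα : α ∈ Set.Ioo (0 : ℝ) 1) :
    Filter.limsup
        (fun n => P n {ω | ∃ C ∈ nullClusters (𝒯 n) (S₀ n), Qhier (𝒯 n) (p n) γ C ω ≤ α})
        Filter.atTop ≤ ENNReal.ofReal α
      ∧ Filter.limsup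
        (fun n => P n {ω | ∃ C ∈ nullClusters (𝒯 n) (S₀ n), Phier (𝒯 n) (p n) γmin C ω ≤ α})
        Filter.atTop ≤ ENNReal.ofReal α :=
  asymptotic_fwer_control_general Ω (mΩ := mΩ) P S₀ 𝒯 B hB p hmeas hp01 A hA hPA hsuper hγmin hγ hα
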